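/- arXiv:2503.03920 — 4 statements merged into one kernel-verified Lean document; each statement's English description precedes it below -/
import Mathlib

section
/- Suppose f(x,y) is μ-strongly convex in y and has L-Lipschitz gradient jointly in (x,y). Then Φ(x) := f(x, y*(x)) has Lipschitz gradient with constant L_Φ = L + L²/μ, i.e., ‖∇Φ(x₁) − ∇Φ(x₂)‖ ≤ (L + L²/μ)‖x₁ − x₂‖ for all x₁, x₂. -/
/-!
At the minimiser `y*(x)` the partial gradient `∇_y f(x, ·)` vanishes, and a `μ`-strongly convex
function has a `μ`-strongly monotone gradient. Comparing `∇_y f(x₁, ·)` at `y*(x₁)` and `y*(x₂)`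
therefore gives `μ ‖y*(x₁) - y*(x₂)‖ ≤ ‖∇_y f(x₁, y*(x₂)) - ∇_y f(x₂, y*(x₂))‖ ≤ L ‖x₁ - x₂‖`,
so `y*` is `L/μ`-Lipschitz. The joint Lipschitz bound on `∇_x f` then yields
`‖∇Φ(x₁) - ∇Φ(x₂)‖ ≤ L (‖x₁ - x₂‖ + ‖y*(x₁) - y*(x₂)‖) ≤ (L + L²/μ) ‖x₁ - x₂‖`.
-/

open InnerProductSpace AffineMap

lemma Real.sqrt_sq_add_sq_le_add {a b : ℝ} (ha : 0 ≤ a) (hb : 0 ≤ b) :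
    √(a ^ 2 + b ^ 2) ≤ a + b :=
  Real.sqrt_le_iff.mpr ⟨by positivity, by nlinarith⟩

variable {E : Type*} [NormedAddCommGroup E]

lemma ConvexOn.add_le_of_hasFDerivAt [NormedSpace ℝ E] {s : Set E} {h : E → ℝ}
    {h' : E →L[ℝ] ℝ} {z y : E} (hc : ConvexOn ℝ s h) (hz : z ∈ s) (hy : y ∈ s)
    (hd : HasFDerivAt h h' z) : h z + h' (y - z) ≤ h y := by
  have hline : ConvexOn ℝ (lineMap z y ⁻¹' s) (h ∘ (lineMap z y : ℝ →ᵃ[ℝ] E)) :=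
    hc.comp_affineMap _
  have hderiv : HasDerivAt (h ∘ (lineMap z y : ℝ →ᵃ[ℝ] E)) (h' (y - z)) 0 :=
    (lineMap_apply_zero z y (k := ℝ) ▸ hd).comp_hasDerivAt (0 : ℝ) hasDerivAt_lineMap
  have := hline.le_slope_of_hasDerivAt (by simpa) (by simpa) zero_lt_one hderiv
  rw [slope_def_field] at this
  simp only [Function.comp_apply, lineMap_apply_zero, lineMap_apply_one] at this
  linarith

variable [InnerProductSpace ℝ E] [CompleteSpace E] {s : Set E} {g : E → ℝ} {μ : ℝ}

lemma StrongConvexOn.add_inner_gradient_le (hsc : StrongConvexOn s μ g) {z y : E}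
    (hz : z ∈ s) (hy : y ∈ s) (hd : DifferentiableAt ℝ g z) :
    g z + ⟪gradient g z, y - z⟫_ℝ + μ / 2 * ‖y - z‖ ^ 2 ≤ g y := by
  have hderiv : HasFDerivAt (fun w => g w - μ / 2 * ‖w‖ ^ 2)
      (toDual ℝ E (gradient g z) - (μ / 2) • 2 • innerSL ℝ z) z :=
    hd.hasGradientAt.hasFDerivAt.sub ((hasStrictFDerivAt_norm_sq z).hasFDerivAt.const_mul _)
  have := (strongConvexOn_iff_convex.mp hsc).add_le_of_hasFDerivAt hz hy hderiv
  simp only [sub_apply, toDual_apply_apply, smul_apply,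
    innerSL_apply_apply, smul_eq_mul, nsmul_eq_mul, Nat.cast_ofNat] at this
  have hsq : ‖y‖ ^ 2 = ‖z‖ ^ 2 + 2 * ⟪z, y - z⟫_ℝ + ‖y - z‖ ^ 2 := by
    rw [← norm_add_sq_real, add_sub_cancel]
  rw [hsq] at this
  linarith

lemma StrongConvexOn.mul_norm_sub_sq_le_inner_gradient_sub (hsc : StrongConvexOn s μ g)
    {x y : E} (hx : x ∈ s) (hy : y ∈ s) (hdx : DifferentiableAt ℝ g x)
    (hdy : DifferentiableAt ℝ g y) :
    μ * ‖x - y‖ ^ 2 ≤ ⟪gradient g x - gradient g y, x - y⟫_ℝ := by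
  have hxy := hsc.add_inner_gradient_le hx hy hdx
  have hyx := hsc.add_inner_gradient_le hy hx hdy
  rw [← neg_sub x y, inner_neg_right, norm_neg] at hxy
  rw [inner_sub_left]
  linarith

lemma StrongConvexOn.mul_norm_sub_le_norm_gradient_sub (hsc : StrongConvexOn s μ g)
    {x y : E} (hx : x ∈ s) (hy : y ∈ s) (hdx : DifferentiableAt ℝ g x)
    (hdy : DifferentiableAt ℝ g y) :
    μ * ‖x - y‖ ≤ ‖gradient g x - gradient g y‖ := by
  rcases (norm_nonneg (x - y)).eq_or_lt with hxy | hxy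
  · simp [← hxy]
  refine le_of_mul_le_mul_right ?_ hxy
  calc μ * ‖x - y‖ * ‖x - y‖ = μ * ‖x - y‖ ^ 2 := by ring
    _ ≤ ⟪gradient g x - gradient g y, x - y⟫_ℝ :=
      hsc.mul_norm_sub_sq_le_inner_gradient_sub hx hy hdx hdy
    _ ≤ ‖gradient g x - gradient g y‖ * ‖x - y‖ := real_inner_le_norm _ _

lemma gradient_eq_zero_of_isMinOn {y : E} (hmin : IsMinOn g Set.univ y) :
    gradient g y = 0 := by
  rw [gradient, (hmin.isLocalMin Filter.univ_mem).fderiv_eq_zero, map_zero]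

lemma StrongConvexOn.mul_norm_sub_le_of_isMinOn {g₁ g₂ : E → ℝ} {y₁ y₂ : E}
    (hsc : StrongConvexOn Set.univ μ g₁) (hd₁ : DifferentiableAt ℝ g₁ y₁)
    (hd₂ : DifferentiableAt ℝ g₁ y₂) (hmin₁ : IsMinOn g₁ Set.univ y₁)
    (hmin₂ : IsMinOn g₂ Set.univ y₂) :
    μ * ‖y₁ - y₂‖ ≤ ‖gradient g₁ y₂ - gradient g₂ y₂‖ := by
  have := hsc.mul_norm_sub_le_norm_gradient_sub trivial trivial hd₁ hd₂
  rwa [gradient_eq_zero_of_isMinOn hmin₁, zero_sub, norm_neg,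
    ← sub_zero (gradient g₁ y₂), ← gradient_eq_zero_of_isMinOn hmin₂] at this

theorem hypergradient_lipschitz_general {m n : ℕ}
    (f : EuclideanSpace ℝ (Fin m) → EuclideanSpace ℝ (Fin n) → ℝ)
    (μ L : ℝ) (hμ : 0 < μ) (hL : 0 < L)
    (hdiff : ∀ x, Differentiable ℝ (f x))
    (hsc : ∀ x, StrongConvexOn Set.univ μ (f x))
    (hlipy : ∀ x₁ x₂ y₁ y₂,
      ‖gradient (f x₁) y₁ - gradient (f x₂) y₂‖ ≤
        L * Real.sqrt (‖x₁ - x₂‖ ^ 2 + ‖y₁ - y₂‖ ^ 2))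
    (hlipx : ∀ x₁ x₂ y₁ y₂,
      ‖gradient (fun x => f x y₁) x₁ - gradient (fun x => f x y₂) x₂‖ ≤
        L * Real.sqrt (‖x₁ - x₂‖ ^ 2 + ‖y₁ - y₂‖ ^ 2))
    (ystar : EuclideanSpace ℝ (Fin m) → EuclideanSpace ℝ (Fin n))
    (hmin : ∀ x, IsMinOn (f x) Set.univ (ystar x)) :
    ∀ x₁ x₂,
      ‖gradient (fun x => f x (ystar x₁)) x₁ -
        gradient (fun x => f x (ystar x₂)) x₂‖ ≤
      (L + L ^ 2 / μ) * ‖x₁ - x₂‖ := by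
  intro x₁ x₂
  set D := ‖x₁ - x₂‖
  set Δ := ‖ystar x₁ - ystar x₂‖
  have hΔ : μ * Δ ≤ L * D := by
    refine ((hsc x₁).mul_norm_sub_le_of_isMinOn (hdiff x₁ _) (hdiff x₁ _) (hmin x₁)
      (hmin x₂)).trans ?_
    simpa [Real.sqrt_sq (norm_nonneg _)] using hlipy x₁ x₂ (ystar x₂) (ystar x₂)
  calc _ ≤ L * Real.sqrt (D ^ 2 + Δ ^ 2) := hlipx x₁ x₂ (ystar x₁) (ystar x₂)
    _ ≤ L * (D + L / μ * D) := by
      gcongr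
      refine (Real.sqrt_sq_add_sq_le_add (norm_nonneg _) (norm_nonneg _)).trans ?_
      gcongr
      rwa [div_mul_eq_mul_div, le_div_iff₀' hμ]
    _ = (L + L ^ 2 / μ) * D := by ring

/-- `Φ(x) = f(x, y*(x))` has `(L + L²/μ)`-Lipschitz gradient, where
`∇Φ(x) = ∇_x f(x, y*(x))` by the implicit function theorem. -/
theorem hypergradient_lipschitz {m n : ℕ}
    (f : EuclideanSpace ℝ (Fin m) → EuclideanSpace ℝ (Fin n) → ℝ)
    (μ L : ℝ) (hμ : 0 < μ) (hL : 0 < L)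
    (hdiff : ∀ x, Differentiable ℝ (f x))
    (hdiffx : ∀ y, Differentiable ℝ (fun x => f x y))
    (hsc : ∀ x, StrongConvexOn Set.univ μ (f x))
    (hlipy : ∀ x₁ x₂ y₁ y₂,
      ‖gradient (f x₁) y₁ - gradient (f x₂) y₂‖ ≤
        L * Real.sqrt (‖x₁ - x₂‖ ^ 2 + ‖y₁ - y₂‖ ^ 2))
    (hlipx : ∀ x₁ x₂ y₁ y₂,
      ‖gradient (fun x => f x y₁) x₁ - gradient (fun x => f x y₂) x₂‖ ≤
        L * Real.sqrt (‖x₁ - x₂‖ ^ 2 + ‖y₁ - y₂‖ ^ 2))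
    (ystar : EuclideanSpace ℝ (Fin m) → EuclideanSpace ℝ (Fin n))
    (hmin : ∀ x, IsMinOn (f x) Set.univ (ystar x)) :
    ∀ x₁ x₂,
      ‖gradient (fun x => f x (ystar x₁)) x₁ -
        gradient (fun x => f x (ystar x₂)) x₂‖ ≤
      (L + L ^ 2 / μ) * ‖x₁ - x₂‖ :=
  hypergradient_lipschitz_general f μ L hμ hL hdiff hsc hlipy hlipx ystar hmin
end

section
/- Let f be μ-strongly convex in y with L-Lipschitz gradient jointly in (x,y), and α ≤ 1/L. Define y^{t+1} = y^t − α∇_y f(x^t, y^t) and the hypergradient estimate ĝ = ∇_x f(x^t, y^{t+1}) − α∇_{xy} f(x^t, y^t)∇_y f(x^t, y^{t+1}). Then ‖ĝ − ∇Φ(x^t)‖ ≤ L(αL + 1)(1 − αμ)^{1/2} ‖y^t − y*(x^t)‖, where ∇Φ(x^t) = ∇_x f(x^t, y*(x^t)). -/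
/-! The gradient step `y ↦ y - α ∇_y f(x, y)` contracts the distance to `y*(x)` by `√(1 - αμ)`:
expanding the square, strong monotonicity of `∇_y f(x, ·)` bounds the cross term, and
co-coercivity `‖∇g a - ∇g b‖² / L ≤ ⟪∇g a - ∇g b, a - b⟫` of convex functions with
`L`-Lipschitz gradient absorbs the `α²` term as soon as `α ≤ 1 / L`. Since `∇_y f(x, y*) = 0`,
the two error terms of the estimate, `∇_x f(x, y⁺) - ∇_x f(x, y*)` and `α ∇_{xy} f ∇_y f(x, y⁺)`,
are at most `L ‖y⁺ - y*‖` and `α L² ‖y⁺ - y*‖`. -/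

open Set InnerProductSpace
open scoped Gradient

section GradientInequalities

variable {E : Type*} [NormedAddCommGroup E] [InnerProductSpace ℝ E] [CompleteSpace E]
  {g : E → ℝ} {μ L α : ℝ}

theorem hasDerivAt_comp_add_smul (hg : Differentiable ℝ g) (b u : E) (t : ℝ) :
    HasDerivAt (fun s : ℝ => g (b + s • u)) ⟪∇ g (b + t • u), u⟫_ℝ t := by
  have hline : HasDerivAt (fun s : ℝ => b + s • u) u t := by
    simpa using ((hasDerivAt_id t).smul_const u).const_add b
  exact (hg _).hasGradientAt.hasFDerivAt.comp_hasDerivAt t hline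

theorem hasGradientAt_sub_inner {b : E} (hg : DifferentiableAt ℝ g b) (v : E) :
    HasGradientAt (fun z => g z - ⟪v, z⟫_ℝ) (∇ g b - v) b := by
  rw [hasGradientAt_iff_hasFDerivAt]
  refine (hg.hasFDerivAt.sub (toDual ℝ E v).hasFDerivAt).congr_fderiv ?_
  ext
  simp [gradient]

theorem hasGradientAt_sub_mul_norm_sq {b : E} (hg : DifferentiableAt ℝ g b) (c : ℝ) :
    HasGradientAt (fun z => g z - c / 2 * ‖z‖ ^ 2) (∇ g b - c • b) b := by
  rw [hasGradientAt_iff_hasFDerivAt]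
  refine (hg.hasFDerivAt.sub
    ((hasStrictFDerivAt_norm_sq b).hasFDerivAt.const_mul (c / 2))).congr_fderiv ?_
  ext
  simp [gradient]
  ring

theorem ConvexOn.add_inner_gradient_le (hg : Differentiable ℝ g) (hc : ConvexOn ℝ univ g)
    (a b : E) : g b + ⟪∇ g b, a - b⟫_ℝ ≤ g a := by
  have hline : ConvexOn ℝ univ (fun s : ℝ => g (b + s • (a - b))) := by
    simpa [Function.comp_def, AffineMap.lineMap_apply, add_comm] using
      hc.comp_affineMap (AffineMap.lineMap b a)
  have hd := hasDerivAt_comp_add_smul hg b (a - b) 0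
  have := hline.deriv_le_slope (mem_univ 0) (mem_univ 1) one_pos hd.differentiableAt
  simp only [hd.deriv, slope_def_field, zero_smul, add_zero, one_smul, add_sub_cancel,
    sub_zero, div_one] at this
  linarith

theorem ConvexOn.isMinOn_of_gradient_eq_zero (hg : Differentiable ℝ g)
    (hc : ConvexOn ℝ univ g) {w : E} (hw : ∇ g w = 0) : IsMinOn g univ w :=
  fun a _ => by simpa [hw] using hc.add_inner_gradient_le hg a w

theorem ConvexOn.inner_gradient_sub_nonneg (hg : Differentiable ℝ g) (hc : ConvexOn ℝ univ g)
    (a b : E) : 0 ≤ ⟪∇ g a - ∇ g b, a - b⟫_ℝ := by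
  have hab := hc.add_inner_gradient_le hg a b
  have hba := hc.add_inner_gradient_le hg b a
  rw [← neg_sub a b, inner_neg_right] at hba
  rw [inner_sub_left]
  linarith

theorem StrongConvexOn.mul_norm_sq_le_inner_gradient_sub (hg : Differentiable ℝ g)
    (hsc : StrongConvexOn univ μ g) (a b : E) :
    μ * ‖a - b‖ ^ 2 ≤ ⟪∇ g a - ∇ g b, a - b⟫_ℝ := by
  have hgrad := gradient_eq fun z => hasGradientAt_sub_mul_norm_sq (hg z) μ
  have hdiff : Differentiable ℝ fun z => g z - μ / 2 * ‖z‖ ^ 2 :=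
    fun z => (hasGradientAt_sub_mul_norm_sq (hg z) μ).differentiableAt
  have := (strongConvexOn_iff_convex.mp hsc).inner_gradient_sub_nonneg hdiff a b
  rw [hgrad, sub_sub_sub_comm, ← smul_sub, inner_sub_left, real_inner_smul_left,
    real_inner_self_eq_norm_sq] at this
  linarith

theorem le_add_inner_gradient_add_mul_norm_sq (hg : Differentiable ℝ g)
    (hlip : ∀ p q, ‖∇ g p - ∇ g q‖ ≤ L * ‖p - q‖) (a b : E) :
    g a ≤ g b + ⟪∇ g b, a - b⟫_ℝ + L / 2 * ‖a - b‖ ^ 2 := by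
  set u := a - b
  set ψ : ℝ → ℝ := fun s => g (b + s • u) - s * ⟪∇ g b, u⟫_ℝ - L / 2 * s ^ 2 * ‖u‖ ^ 2
  have hψ : ∀ t, HasDerivAt ψ (⟪∇ g (b + t • u) - ∇ g b, u⟫_ℝ - L * t * ‖u‖ ^ 2) t := by
    intro t
    refine (((hasDerivAt_comp_add_smul hg b u t).sub
      ((hasDerivAt_id t).mul_const ⟪∇ g b, u⟫_ℝ)).sub
      (((hasDerivAt_pow 2 t).const_mul (L / 2)).mul_const (‖u‖ ^ 2))).congr_deriv ?_
    simp only [inner_sub_left, Nat.cast_ofNat]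
    ring
  have hψ' : ∀ t ∈ interior (Ici (0 : ℝ)),
      ⟪∇ g (b + t • u) - ∇ g b, u⟫_ℝ - L * t * ‖u‖ ^ 2 ≤ 0 := by
    rw [interior_Ici]
    intro t ht
    have := calc
      ⟪∇ g (b + t • u) - ∇ g b, u⟫_ℝ ≤ ‖∇ g (b + t • u) - ∇ g b‖ * ‖u‖ := real_inner_le_norm _ _
      _ ≤ L * ‖t • u‖ * ‖u‖ := by gcongr; simpa using hlip (b + t • u) b
      _ = L * t * ‖u‖ ^ 2 := by rw [norm_smul_of_nonneg (le_of_lt ht)]; ring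
    linarith
  have hanti : AntitoneOn ψ (Ici 0) :=
    antitoneOn_of_hasDerivWithinAt_nonpos (convex_Ici 0)
      (fun t _ => (hψ t).continuousAt.continuousWithinAt) (fun t _ => (hψ t).hasDerivWithinAt) hψ'
  have := hanti (mem_Ici.2 le_rfl) (mem_Ici.2 zero_le_one) zero_le_one
  simp only [ψ, u, zero_smul, add_zero, one_smul, add_sub_cancel, zero_mul, sub_zero, one_mul,
    one_pow, ne_eq, OfNat.ofNat_ne_zero, not_false_eq_true, zero_pow, mul_zero] at this
  linarith

theorem IsMinOn.norm_gradient_sq_div_le (hg : Differentiable ℝ g) (hL : 0 < L)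
    (hlip : ∀ p q, ‖∇ g p - ∇ g q‖ ≤ L * ‖p - q‖) {w : E} (hw : IsMinOn g univ w) (z : E) :
    ‖∇ g z‖ ^ 2 / (2 * L) ≤ g z - g w := by
  have hmin : g w ≤ g (z - L⁻¹ • ∇ g z) := hw (mem_univ _)
  have hdesc := le_add_inner_gradient_add_mul_norm_sq hg hlip (z - L⁻¹ • ∇ g z) z
  rw [sub_sub_cancel_left, inner_neg_right, real_inner_smul_right, real_inner_self_eq_norm_sq,
    norm_neg, norm_smul, Real.norm_of_nonneg (inv_nonneg.2 hL.le)] at hdesc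
  have : L⁻¹ * ‖∇ g z‖ ^ 2 - L / 2 * (L⁻¹ * ‖∇ g z‖) ^ 2 = ‖∇ g z‖ ^ 2 / (2 * L) := by
    field_simp
    ring
  linarith

theorem ConvexOn.norm_gradient_sub_sq_div_le (hg : Differentiable ℝ g) (hc : ConvexOn ℝ univ g)
    (hL : 0 < L) (hlip : ∀ p q, ‖∇ g p - ∇ g q‖ ≤ L * ‖p - q‖) (a b : E) :
    ‖∇ g a - ∇ g b‖ ^ 2 / (2 * L) ≤ g a - g b - ⟪∇ g b, a - b⟫_ℝ := by
  -- the tilted function `h` is convex with a critical point, hence a minimum, at `b`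
  set h : E → ℝ := fun z => g z - ⟪∇ g b, z⟫_ℝ
  have hgrad : ∇ h = fun z => ∇ g z - ∇ g b :=
    gradient_eq fun z => hasGradientAt_sub_inner (hg z) (∇ g b)
  have hdiff : Differentiable ℝ h :=
    fun z => (hasGradientAt_sub_inner (hg z) (∇ g b)).differentiableAt
  have hconv : ConvexOn ℝ univ h :=
    hc.sub ((innerSL ℝ (∇ g b)).toLinearMap.concaveOn convex_univ)
  have hmin : IsMinOn h univ b := hconv.isMinOn_of_gradient_eq_zero hdiff (by simp [hgrad])
  have := hmin.norm_gradient_sq_div_le hdiff hL (by simpa [hgrad] using hlip) a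
  rw [hgrad] at this
  simp only [h] at this
  rw [inner_sub_right]
  linarith

theorem ConvexOn.norm_gradient_sub_sq_div_le_inner (hg : Differentiable ℝ g)
    (hc : ConvexOn ℝ univ g) (hL : 0 < L) (hlip : ∀ p q, ‖∇ g p - ∇ g q‖ ≤ L * ‖p - q‖)
    (a b : E) : ‖∇ g a - ∇ g b‖ ^ 2 / L ≤ ⟪∇ g a - ∇ g b, a - b⟫_ℝ := by
  have hab := hc.norm_gradient_sub_sq_div_le hg hL hlip a b
  have hba := hc.norm_gradient_sub_sq_div_le hg hL hlip b a
  rw [norm_sub_rev, ← neg_sub a b, inner_neg_right] at hba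
  have : ‖∇ g a - ∇ g b‖ ^ 2 / L = 2 * (‖∇ g a - ∇ g b‖ ^ 2 / (2 * L)) := by
    field_simp
  rw [inner_sub_left]
  linarith

theorem StrongConvexOn.norm_sub_smul_gradient_sub_le (hg : Differentiable ℝ g)
    (hsc : StrongConvexOn univ μ g) (hμ : 0 ≤ μ) (hL : 0 < L) (hα : 0 ≤ α) (hαL : α ≤ 1 / L)
    (hlip : ∀ p q, ‖∇ g p - ∇ g q‖ ≤ L * ‖p - q‖) (z w : E) :
    ‖(z - α • ∇ g z) - (w - α • ∇ g w)‖ ≤ √(1 - α * μ) * ‖z - w‖ := by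
  set v := ∇ g z - ∇ g w
  set e := z - w
  have hstrong : μ * ‖e‖ ^ 2 ≤ ⟪v, e⟫_ℝ := hsc.mul_norm_sq_le_inner_gradient_sub hg z w
  have hcoco : ‖v‖ ^ 2 / L ≤ ⟪v, e⟫_ℝ :=
    (strongConvexOn_zero.mp (hsc.mono hμ)).norm_gradient_sub_sq_div_le_inner hg hL hlip z w
  have hstep : (z - α • ∇ g z) - (w - α • ∇ g w) = e - α • v := by
    simp only [e, v, smul_sub]
    abel
  have hα2 : α ^ 2 * ‖v‖ ^ 2 ≤ α * (‖v‖ ^ 2 / L) := by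
    rw [div_eq_mul_one_div, mul_comm (‖v‖ ^ 2), ← mul_assoc, sq]
    gcongr
  have hsq : ‖e - α • v‖ ^ 2 ≤ (1 - α * μ) * ‖e‖ ^ 2 := by
    rw [norm_sub_sq_real, real_inner_smul_right, norm_smul, mul_pow, Real.norm_of_nonneg hα,
      real_inner_comm]
    nlinarith [mul_le_mul_of_nonneg_left hstrong hα, mul_le_mul_of_nonneg_left hcoco hα]
  calc ‖(z - α • ∇ g z) - (w - α • ∇ g w)‖ = √(‖e - α • v‖ ^ 2) := by
        rw [hstep, Real.sqrt_sq (norm_nonneg _)]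
    _ ≤ √((1 - α * μ) * ‖e‖ ^ 2) := Real.sqrt_le_sqrt hsq
    _ = √(1 - α * μ) * ‖e‖ := by rw [Real.sqrt_mul' _ (sq_nonneg _), Real.sqrt_sq (norm_nonneg _)]

end GradientInequalities

theorem hypergradient_bias_general {m n : ℕ}
    (f : EuclideanSpace ℝ (Fin m) → EuclideanSpace ℝ (Fin n) → ℝ)
    (μ L α : ℝ) (hμ : 0 < μ) (hL : 0 < L) (hα : 0 < α) (hαL : α ≤ 1 / L)
    (hdiff : ContDiff ℝ 2 (fun p : EuclideanSpace ℝ (Fin m) × EuclideanSpace ℝ (Fin n) => f p.1 p.2))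
    (hsc : ∀ x, StrongConvexOn Set.univ μ (f x))
    (hlipy : ∀ x₁ x₂ y₁ y₂,
      ‖gradient (f x₁) y₁ - gradient (f x₂) y₂‖ ≤
        L * Real.sqrt (‖x₁ - x₂‖ ^ 2 + ‖y₁ - y₂‖ ^ 2))
    (hlipx : ∀ x₁ x₂ y₁ y₂,
      ‖gradient (fun x => f x y₁) x₁ - gradient (fun x => f x y₂) x₂‖ ≤
        L * Real.sqrt (‖x₁ - x₂‖ ^ 2 + ‖y₁ - y₂‖ ^ 2))
    (ystar : EuclideanSpace ℝ (Fin m) → EuclideanSpace ℝ (Fin n))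
    (hmin : ∀ x, IsMinOn (f x) Set.univ (ystar x))
    (x : EuclideanSpace ℝ (Fin m)) (y y' : EuclideanSpace ℝ (Fin n))
    (Mxy : EuclideanSpace ℝ (Fin n) →L[ℝ] EuclideanSpace ℝ (Fin m))
    -- `Mxy` is the mixed second derivative `∇_{xy} f(x, y)`, bounded by `L`
    (hMbound : ‖Mxy‖ ≤ L)
    (hy' : y' = y - α • gradient (f x) y) :
    ‖(gradient (fun x' => f x' y') x - α • Mxy (gradient (f x) y')) -
        gradient (fun x' => f x' (ystar x)) x‖ ≤
      L * (α * L + 1) * Real.sqrt (1 - α * μ) * ‖y - ystar x‖ := by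
  have hdiffy : Differentiable ℝ (f x) :=
    (hdiff.differentiable two_ne_zero).comp ((differentiable_const x).prodMk differentiable_id)
  have hlip : ∀ p q, ‖∇ (f x) p - ∇ (f x) q‖ ≤ L * ‖p - q‖ := fun p q => by
    simpa using hlipy x x p q
  have hcrit : ∇ (f x) (ystar x) = 0 := by
    simp [gradient, ((hmin x).isLocalMin Filter.univ_mem).fderiv_eq_zero]
  have hstep : ‖y' - ystar x‖ ≤ √(1 - α * μ) * ‖y - ystar x‖ := by
    simpa [hy', hcrit] using
      (hsc x).norm_sub_smul_gradient_sub_le hdiffy hμ.le hL hα.le hαL hlip y (ystar x)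
  have hgx : ‖∇ (fun x' => f x' y') x - ∇ (fun x' => f x' (ystar x)) x‖ ≤ L * ‖y' - ystar x‖ := by
    simpa using hlipx x x y' (ystar x)
  have hgy : ‖∇ (f x) y'‖ ≤ L * ‖y' - ystar x‖ := by simpa [hcrit] using hlip y' (ystar x)
  calc _ = ‖(∇ (fun x' => f x' y') x - ∇ (fun x' => f x' (ystar x)) x) -
        α • Mxy (∇ (f x) y')‖ := by rw [sub_right_comm]
    _ ≤ L * ‖y' - ystar x‖ + α * (L * (L * ‖y' - ystar x‖)) := by
      refine (norm_sub_le _ _).trans ?_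
      rw [norm_smul_of_nonneg hα.le]
      gcongr
      exact Mxy.le_of_opNorm_le_of_le hMbound hgy
    _ = L * (α * L + 1) * ‖y' - ystar x‖ := by ring
    _ ≤ L * (α * L + 1) * (√(1 - α * μ) * ‖y - ystar x‖) := by gcongr
    _ = _ := by ring

/-- Hypergradient bias bound: the estimate
`ĝ = ∇_x f(x,y⁺) − α ∇_{xy} f(x,y) ∇_y f(x,y⁺)` with `y⁺ = y − α∇_y f(x,y)`
satisfies `‖ĝ − ∇Φ(x)‖ ≤ L(αL+1)√(1−αμ) ‖y − y*(x)‖`. -/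
theorem hypergradient_bias {m n : ℕ}
    (f : EuclideanSpace ℝ (Fin m) → EuclideanSpace ℝ (Fin n) → ℝ)
    (μ L α : ℝ) (hμ : 0 < μ) (hL : 0 < L) (hα : 0 < α) (hαL : α ≤ 1 / L)
    (hdiff : ContDiff ℝ 2 (fun p : EuclideanSpace ℝ (Fin m) × EuclideanSpace ℝ (Fin n) => f p.1 p.2))
    (hsc : ∀ x, StrongConvexOn Set.univ μ (f x))
    (hlipy : ∀ x₁ x₂ y₁ y₂,
      ‖gradient (f x₁) y₁ - gradient (f x₂) y₂‖ ≤
        L * Real.sqrt (‖x₁ - x₂‖ ^ 2 + ‖y₁ - y₂‖ ^ 2))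
    (hlipx : ∀ x₁ x₂ y₁ y₂,
      ‖gradient (fun x => f x y₁) x₁ - gradient (fun x => f x y₂) x₂‖ ≤
        L * Real.sqrt (‖x₁ - x₂‖ ^ 2 + ‖y₁ - y₂‖ ^ 2))
    (ystar : EuclideanSpace ℝ (Fin m) → EuclideanSpace ℝ (Fin n))
    (hmin : ∀ x, IsMinOn (f x) Set.univ (ystar x))
    (x : EuclideanSpace ℝ (Fin m)) (y y' : EuclideanSpace ℝ (Fin n))
    (Mxy : EuclideanSpace ℝ (Fin n) →L[ℝ] EuclideanSpace ℝ (Fin m))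
    -- `Mxy` is the mixed second derivative `∇_{xy} f(x, y)`, bounded by `L`
    (hMxy : Mxy = ContinuousLinearMap.adjoint
      (fderiv ℝ (fun x' => gradient (f x') y) x))
    (hMbound : ‖Mxy‖ ≤ L)
    (hy' : y' = y - α • gradient (f x) y) :
    ‖(gradient (fun x' => f x' y') x - α • Mxy (gradient (f x) y')) -
        gradient (fun x' => f x' (ystar x)) x‖ ≤
      L * (α * L + 1) * Real.sqrt (1 - α * μ) * ‖y - ystar x‖ :=
  hypergradient_bias_general f μ L α hμ hL hα hαL hdiff hsc hlipy hlipx ystar hmin x y y' Mxy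
    hMbound hy'
end

section
/- Suppose ‖y^{t+1} − y*(x^t)‖² ≤ (1 − αμ)‖y^t − y*(x^t)‖², the map y* is (L/μ)-Lipschitz, and ‖x^{t+1} − x^t‖² ≤ 2η²(‖h^t − ∇Φ(x^t)‖² + ‖∇Φ(x^t)‖²) with ‖h^t − ∇Φ(x^t)‖ ≤ A‖y^t − y*(x^t)‖. Then ‖y^{t+1} − y*(x^{t+1})‖² ≤ C‖y^t − y*(x^t)‖² + D‖∇Φ(x^t)‖², where C = 1 − α²μ² + 2(1 + 1/(αμ))(L²/μ²)η²A² and D = 2(1 + 1/(αμ))η²L²/μ². -/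
lemma young_sq (s t lam : ℝ) (hs : 0 ≤ s) (ht : 0 ≤ t) (hl : 0 < lam) :
    (s + t) ^ 2 ≤ (1 + lam) * s ^ 2 + (1 + 1 / lam) * t ^ 2 := by
  have hmul : ((s + t) ^ 2) * lam ≤ ((1 + lam) * s ^ 2 + (1 + 1 / lam) * t ^ 2) * lam := by
    have h1 : (1 / lam) * lam = 1 := by field_simp
    nlinarith [sq_nonneg (lam * s - t)]
  exact le_of_mul_le_mul_right hmul hl

/-- Lower-level tracking error recursion:
`‖y^{t+1} − y*(x^{t+1})‖² ≤ C‖y^t − y*(x^t)‖² + D‖∇Φ(x^t)‖²`. -/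
theorem lower_level_recursion {m n : ℕ}
    (α μ η L A : ℝ)
    (hα : 0 < α) (hμ : 0 < μ) (hη : 0 < η) (hL : 0 < L) (hA : 0 < A)
    (hαμ : α * μ < 1)
    (x : ℕ → EuclideanSpace ℝ (Fin m))
    (y : ℕ → EuclideanSpace ℝ (Fin n))
    (ystar : EuclideanSpace ℝ (Fin m) → EuclideanSpace ℝ (Fin n))
    (g h : ℕ → EuclideanSpace ℝ (Fin m))  -- `g t = ∇Φ(x^t)`, `h t = h^t`
    (hy : ∀ t, ‖y (t + 1) - ystar (x t)‖ ^ 2 ≤ (1 - α * μ) * ‖y t - ystar (x t)‖ ^ 2)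
    (hlip : ∀ x₁ x₂, ‖ystar x₁ - ystar x₂‖ ≤ (L / μ) * ‖x₁ - x₂‖)
    (hx : ∀ t, ‖x (t + 1) - x t‖ ^ 2 ≤ 2 * η ^ 2 * (‖h t - g t‖ ^ 2 + ‖g t‖ ^ 2))
    (hbias : ∀ t, ‖h t - g t‖ ≤ A * ‖y t - ystar (x t)‖) :
    ∀ t, ‖y (t + 1) - ystar (x (t + 1))‖ ^ 2 ≤
      (1 - α ^ 2 * μ ^ 2 + 2 * (1 + 1 / (α * μ)) * (L ^ 2 / μ ^ 2) * η ^ 2 * A ^ 2)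
        * ‖y t - ystar (x t)‖ ^ 2
      + (2 * (1 + 1 / (α * μ)) * η ^ 2 * L ^ 2 / μ ^ 2) * ‖g t‖ ^ 2 := by
  intro t
  have hαμ0 : 0 < α * μ := mul_pos hα hμ
  set a := ‖y (t + 1) - ystar (x t)‖ with ha
  set b := ‖ystar (x t) - ystar (x (t + 1))‖ with hb
  -- triangle inequality
  have htri : ‖y (t + 1) - ystar (x (t + 1))‖ ≤ a + b := by
    have := norm_sub_le_norm_sub_add_norm_sub (y (t+1)) (ystar (x t)) (ystar (x (t+1)))
    simpa using this
  have hsq : ‖y (t + 1) - ystar (x (t + 1))‖ ^ 2 ≤ (a + b) ^ 2 := by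
    apply pow_le_pow_left₀ (norm_nonneg _) htri
  have hyoung : (a + b) ^ 2 ≤ (1 + α * μ) * a ^ 2 + (1 + 1 / (α * μ)) * b ^ 2 :=
    young_sq a b (α * μ) (norm_nonneg _) (norm_nonneg _) hαμ0
  -- bound a^2
  have ha2 : a ^ 2 ≤ (1 - α * μ) * ‖y t - ystar (x t)‖ ^ 2 := hy t
  -- bound b^2
  have hb1 : b ≤ (L / μ) * ‖x t - x (t + 1)‖ := hlip _ _
  have hb2 : b ^ 2 ≤ (L / μ) ^ 2 * ‖x (t + 1) - x t‖ ^ 2 := by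
    have hnn : 0 ≤ (L / μ) * ‖x t - x (t + 1)‖ := by positivity
    calc b ^ 2 ≤ ((L / μ) * ‖x t - x (t + 1)‖) ^ 2 :=
          pow_le_pow_left₀ (norm_nonneg _) hb1 2
      _ = (L / μ) ^ 2 * ‖x (t + 1) - x t‖ ^ 2 := by
          rw [mul_pow, norm_sub_rev]
  have hxb : ‖x (t + 1) - x t‖ ^ 2 ≤ 2 * η ^ 2 * (A ^ 2 * ‖y t - ystar (x t)‖ ^ 2 + ‖g t‖ ^ 2) := by
    have h1 := hx t
    have h2 : ‖h t - g t‖ ^ 2 ≤ A ^ 2 * ‖y t - ystar (x t)‖ ^ 2 := by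
      have := pow_le_pow_left₀ (norm_nonneg _) (hbias t) 2
      calc ‖h t - g t‖ ^ 2 ≤ (A * ‖y t - ystar (x t)‖) ^ 2 := this
        _ = A ^ 2 * ‖y t - ystar (x t)‖ ^ 2 := by ring
    nlinarith [sq_nonneg η]
  have hb3 : b ^ 2 ≤ (L / μ) ^ 2 * (2 * η ^ 2 * (A ^ 2 * ‖y t - ystar (x t)‖ ^ 2 + ‖g t‖ ^ 2)) := by
    calc b ^ 2 ≤ (L / μ) ^ 2 * ‖x (t + 1) - x t‖ ^ 2 := hb2
      _ ≤ _ := by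
          apply mul_le_mul_of_nonneg_left hxb (by positivity)
  have hc1 : (0:ℝ) ≤ 1 + α * μ := by linarith
  have hc2 : (0:ℝ) ≤ 1 + 1 / (α * μ) := by positivity
  have key1 : (1 + α * μ) * a ^ 2 ≤ (1 - α ^ 2 * μ ^ 2) * ‖y t - ystar (x t)‖ ^ 2 := by
    calc (1 + α * μ) * a ^ 2 ≤ (1 + α * μ) * ((1 - α * μ) * ‖y t - ystar (x t)‖ ^ 2) :=
          mul_le_mul_of_nonneg_left ha2 hc1
      _ = (1 - α ^ 2 * μ ^ 2) * ‖y t - ystar (x t)‖ ^ 2 := by ring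
  have key2 : (1 + 1 / (α * μ)) * b ^ 2 ≤ (1 + 1 / (α * μ)) *
      ((L / μ) ^ 2 * (2 * η ^ 2 * (A ^ 2 * ‖y t - ystar (x t)‖ ^ 2 + ‖g t‖ ^ 2))) :=
    mul_le_mul_of_nonneg_left hb3 hc2
  have hgoal := le_trans hsq (le_trans hyoung (add_le_add key1 key2))
  calc ‖y (t + 1) - ystar (x (t + 1))‖ ^ 2 ≤ _ := hgoal
    _ = (1 - α ^ 2 * μ ^ 2 + 2 * (1 + 1 / (α * μ)) * (L ^ 2 / μ ^ 2) * η ^ 2 * A ^ 2)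
        * ‖y t - ystar (x t)‖ ^ 2
      + (2 * (1 + 1 / (α * μ)) * η ^ 2 * L ^ 2 / μ ^ 2) * ‖g t‖ ^ 2 := by
        field_simp
        ring
end

section
/- Let A = E and B = F be m×n real matrices with column spaces 𝒞₁, 𝒞₂ and row spaces ℛ₁, ℛ₂. Then rank(E + F) = rank(E) + rank(F) if and only if 𝒞₁ ∩ 𝒞₂ = {0} and ℛ₁ ∩ ℛ₂ = {0}. -/
/-!
Since `range (E + F) ≤ 𝒞₁ ⊔ 𝒞₂`, additivity of the rank forces `𝒞₁ ⊓ 𝒞₂ = ⊥`, and transposing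
gives `ℛ₁ ⊓ ℛ₂ = ⊥`. Conversely, if `𝒞₁ ⊓ 𝒞₂ = ⊥` then `(E + F) x = 0` forces `E x = F x = 0`,
so `E + F` has the same kernel, hence the same rank, as the stacked matrix `[E; F]`, whose row
space is `ℛ₁ ⊔ ℛ₂` of dimension `rank E + rank F` when `ℛ₁ ⊓ ℛ₂ = ⊥`.
-/

open Matrix

namespace Submodule

variable {K V : Type*} [DivisionRing K] [AddCommGroup V] [Module K V]

theorem finrank_sup_eq_add_iff_inf_eq_bot [FiniteDimensional K V] (U W : Submodule K V) :
    Module.finrank K ↥(U ⊔ W) = Module.finrank K U + Module.finrank K W ↔ U ⊓ W = ⊥ := by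
  rw [← finrank_eq_zero, ← finrank_sup_add_finrank_inf_eq U W]
  omega

end Submodule

namespace LinearMap

section Ring

variable {R V W W' : Type*} [Ring R] [AddCommGroup V] [Module R V] [AddCommGroup W]
  [Module R W] [AddCommGroup W'] [Module R W']

theorem ker_add_eq_inf_of_range_inf_eq_bot {f g : V →ₗ[R] W} (h : range f ⊓ range g = ⊥) :
    ker (f + g) = ker f ⊓ ker g := by
  refine le_antisymm (fun x hx => ?_) (fun x ⟨hf, hg⟩ => by simp_all)
  have hfg : f x = -g x := eq_neg_of_add_eq_zero_left hx
  have hf : f x = 0 := by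
    rw [← Submodule.mem_bot R, ← h]
    exact ⟨mem_range_self f x, hfg ▸ neg_mem (mem_range_self g x)⟩
  exact ⟨hf, by simpa [hf] using hfg⟩

theorem finrank_range_eq_of_ker_eq {f : V →ₗ[R] W} {g : V →ₗ[R] W'} (h : ker f = ker g) :
    Module.finrank R (range f) = Module.finrank R (range g) :=
  (f.quotKerEquivRange.symm ≪≫ₗ Submodule.quotEquivOfEq _ _ h ≪≫ₗ g.quotKerEquivRange).finrank_eq

end Ring

theorem range_inf_eq_bot_of_finrank_range_add {K V W : Type*} [DivisionRing K]
    [AddCommGroup V] [Module K V] [AddCommGroup W] [Module K W] [FiniteDimensional K W]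
    {f g : V →ₗ[K] W} (h : Module.finrank K (range (f + g)) =
      Module.finrank K (range f) + Module.finrank K (range g)) :
    range f ⊓ range g = ⊥ := by
  rw [← Submodule.finrank_sup_eq_add_iff_inf_eq_bot]
  refine le_antisymm (Submodule.finrank_add_le_finrank_add_finrank _ _) ?_
  exact h ▸ Submodule.finrank_mono (range_add_le f g)

end LinearMap

namespace Matrix

variable {R m₁ m₂ n : Type*}

theorem ker_mulVecLin_fromRows [CommSemiring R] [Fintype n] (A : Matrix m₁ n R)
    (B : Matrix m₂ n R) :
    LinearMap.ker (fromRows A B).mulVecLin =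
      LinearMap.ker A.mulVecLin ⊓ LinearMap.ker B.mulVecLin := by
  ext v
  simp [funext_iff]

theorem range_mulVecLin_fromCols [CommSemiring R] [Fintype m₁] [Fintype m₂]
    (A : Matrix n m₁ R) (B : Matrix n m₂ R) :
    LinearMap.range (fromCols A B).mulVecLin =
      LinearMap.range A.mulVecLin ⊔ LinearMap.range B.mulVecLin := by
  simp only [range_mulVecLin, ← Submodule.span_union, ← Set.Sum.elim_range]
  congr 2
  ext (j | j) <;> rfl

theorem rank_fromRows_of_inf_eq_bot [Field R] [Fintype m₁] [Fintype m₂] [Fintype n]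
    {A : Matrix m₁ n R} {B : Matrix m₂ n R}
    (h : LinearMap.range Aᵀ.mulVecLin ⊓ LinearMap.range Bᵀ.mulVecLin = ⊥) :
    (fromRows A B).rank = A.rank + B.rank := by
  rw [← rank_transpose, transpose_fromRows, rank, range_mulVecLin_fromCols,
    (Submodule.finrank_sup_eq_add_iff_inf_eq_bot _ _).2 h, ← rank_transpose A,
    ← rank_transpose B]
  rfl

end Matrix

/-- `rank(E + F) = rank E + rank F` iff the column spaces of `E` and `F`
intersect trivially and their row spaces intersect trivially. -/
theorem rank_add_eq_iff_trivial_intersections {m n : ℕ}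
    (E F : Matrix (Fin m) (Fin n) ℝ) :
    (E + F).rank = E.rank + F.rank ↔
      (LinearMap.range E.mulVecLin ⊓ LinearMap.range F.mulVecLin = ⊥ ∧
       LinearMap.range Eᵀ.mulVecLin ⊓ LinearMap.range Fᵀ.mulVecLin = ⊥) := by
  constructor
  · intro h
    have hT : (Eᵀ + Fᵀ).rank = Eᵀ.rank + Fᵀ.rank := by
      simpa only [← transpose_add, rank_transpose] using h
    exact ⟨LinearMap.range_inf_eq_bot_of_finrank_range_add (mulVecLin_add E F ▸ h),
      LinearMap.range_inf_eq_bot_of_finrank_range_add (mulVecLin_add Eᵀ Fᵀ ▸ hT)⟩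
  · rintro ⟨hcol, hrow⟩
    calc (E + F).rank = (fromRows E F).rank :=
          LinearMap.finrank_range_eq_of_ker_eq <| by
            rw [mulVecLin_add, LinearMap.ker_add_eq_inf_of_range_inf_eq_bot hcol,
              ker_mulVecLin_fromRows]
      _ = E.rank + F.rank := rank_fromRows_of_inf_eq_bot hrow
end
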